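/- For a derivation D of P_n, the Jacobian matrix J(D) is nilpotent if and only if div(D^{[q]}) = 0 for all integers q ≥ 1. -/

import Mathlib

open MvPolynomial

/-- `Pn k n` is the polynomial algebra `k[x₁,…,xₙ]`. -/
abbrev Pn (k : Type*) [CommRing k] (n : ℕ) := MvPolynomial (Fin n) k

/-- `Der k n` is the space of `k`-linear derivations of `Pn k n`. -/
abbrev Der (k : Type*) [CommRing k] (n : ℕ) := Derivation k (Pn k n) (Pn k n)

variable {k : Type*} [Field k] [CharZero k] {n : ℕ}

/-- The left-symmetric product of derivations: `(D · E)(xᵢ) = D (E xᵢ)`. -/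
noncomputable def lsMul (D E : Der k n) : Der k n :=
  MvPolynomial.mkDerivation k (fun i => D (E (MvPolynomial.X i)))

/-- The Jacobian matrix of a derivation: `(J D)ᵢⱼ = ∂(D xᵢ)/∂xⱼ`. -/
noncomputable def jac (D : Der k n) : Matrix (Fin n) (Fin n) (Pn k n) :=
  Matrix.of fun i j => MvPolynomial.pderiv j (D (MvPolynomial.X i))

/-- The divergence of a derivation. -/
noncomputable def divg (D : Der k n) : Pn k n :=
  ∑ i, MvPolynomial.pderiv i (D (MvPolynomial.X i))

/-- Right powers: `rpow D 1 = D`, `rpow D (r+1) = (rpow D r) · D` (for `r ≥ 1`). -/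
noncomputable def rpow (D : Der k n) : ℕ → Der k n
  | 0 => D
  | 1 => D
  | (r+2) => lsMul (rpow D (r+1)) D

/-- Left powers: `lpow D 1 = D`, `lpow D (r+1) = D · (lpow D r)` (for `r ≥ 1`). -/
noncomputable def lpow (D : Der k n) : ℕ → Der k n
  | 0 => D
  | 1 => D
  | (r+2) => lsMul D (lpow D (r+1))

/-- Right multiplication operator `R_D : E ↦ E · D`, as a `k`-linear endomorphism. -/
noncomputable def rmulOp (D : Der k n) : Der k n →ₗ[k] Der k n where
  toFun E := lsMul E D
  map_add' E₁ E₂ := by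
    show (MvPolynomial.mkDerivationEquiv k) _ =
      (MvPolynomial.mkDerivationEquiv k) _ + (MvPolynomial.mkDerivationEquiv k) _
    rw [← map_add]
    exact congrArg _ (funext fun i => by simp)
  map_smul' c E := by
    show (MvPolynomial.mkDerivationEquiv k) _ = c • (MvPolynomial.mkDerivationEquiv k) _
    rw [← map_smul]
    exact congrArg _ (funext fun i => by simp)

/-- Left multiplication operator `L_D : E ↦ D · E`, as a `k`-linear endomorphism. -/
noncomputable def lmulOp (D : Der k n) : Der k n →ₗ[k] Der k n where
  toFun E := lsMul D E
  map_add' E₁ E₂ := by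
    show (MvPolynomial.mkDerivationEquiv k) _ =
      (MvPolynomial.mkDerivationEquiv k) _ + (MvPolynomial.mkDerivationEquiv k) _
    rw [← map_add]
    exact congrArg _ (funext fun i => by simp)
  map_smul' c E := by
    show (MvPolynomial.mkDerivationEquiv k) _ = c • (MvPolynomial.mkDerivationEquiv k) _
    rw [← map_smul]
    exact congrArg _ (funext fun i => by simp)

/-- `Zc F i a` is the coefficient of `t^i` in the image of `a` under `xⱼ ↦ xⱼ + t·fⱼ`. -/
noncomputable def Zc (F : Fin n → Pn k n) (i : ℕ) (a : Pn k n) : Pn k n :=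
  (MvPolynomial.aeval
    (fun j => Polynomial.C (MvPolynomial.X j) + Polynomial.C (F j) * Polynomial.X :
      Fin n → Polynomial (Pn k n)) a).coeff i

/-- `PsiOp F m a = Σ (−1)^{k−1} r_k Z_{r₁}(Z_{r₂}(⋯ Z_{r_k}(a)⋯))`, summed over
compositions `(r₁,…,r_k)` of `m`. -/
noncomputable def PsiOp (F : Fin n → Pn k n) (m : ℕ) (a : Pn k n) : Pn k n :=
  ∑ c : Composition m,
    (-1 : Pn k n) ^ (c.length - 1) * ((c.blocks.getLastD 0 : ℕ) : Pn k n) *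
      (c.blocks.foldr (fun r b => Zc F r b) a)

/-!
The Jacobian `J` of `D` satisfies `D^{[q+1]}(xᵢ) = (J^q f)ᵢ` with `f = (D x₁, …, D xₙ)`. Taking the
divergence and using the symmetry of second derivatives, the correction terms of the product rule
are derivatives of lower traces: `tr(J^s ∂_b J) = (s+1)⁻¹ ∂_b tr(J^{s+1})`, whence
`div D^{[q+1]} = tr J^{q+1} + Σ_{s<q} (s+1)⁻¹ D^{[q-s]}(tr J^{s+1})`. By induction on `q`, the
divergences of all right powers vanish iff all traces `tr J^q` (`q ≥ 1`) do, and in characteristic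
zero the latter characterises nilpotency: over an algebraic closure of the fraction field, the
trace of `J^q` is `Σ_μ m_μ μ^q` over the generalized eigenvalues, and such power sums vanish for all
`q ≥ 1` only if every `μ` is `0`.
-/

open Finset

namespace Matrix

variable {R A ι : Type*} [CommSemiring R] [CommSemiring A] [Algebra R A] [Fintype ι]
  (d : Derivation R A A)

theorem map_derivation_mul (M N : Matrix ι ι A) :
    (M * N).map d = M.map d * N + M * N.map d := by
  ext i j
  simp only [map_apply, mul_apply, add_apply, map_sum, Derivation.leibniz, smul_eq_mul,
    ← sum_add_distrib]
  exact sum_congr rfl fun _ _ => by ring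

theorem map_derivation_pow [DecidableEq ι] (M : Matrix ι ι A) (q : ℕ) :
    (M ^ q).map d = ∑ s ∈ range q, M ^ s * M.map d * M ^ (q - 1 - s) := by
  induction q with
  | zero => ext; simp [one_apply, apply_ite]
  | succ q ih =>
    rw [pow_succ, map_derivation_mul, ih, sum_mul, sum_range_succ, Nat.add_sub_cancel,
      Nat.sub_self, pow_zero, mul_one]
    congr 1
    refine sum_congr rfl fun s hs => ?_
    rw [mul_assoc, ← pow_succ]
    congr 2
    have := mem_range.mp hs
    omega

theorem derivation_trace_pow_succ [DecidableEq ι] (M : Matrix ι ι A) (q : ℕ) :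
    d (trace (M ^ (q + 1))) = (q + 1) • trace (M ^ q * M.map d) := by
  rw [AddMonoidHom.map_trace d, map_derivation_pow, trace_sum, Nat.add_sub_cancel,
    sum_eq_card_nsmul (b := trace (M ^ q * M.map d)) fun s hs => ?_, card_range]
  rw [trace_mul_cycle, ← pow_add, Nat.sub_add_cancel (mem_range_succ_iff.mp hs)]

theorem derivation_mulVec_apply (M : Matrix ι ι A) (v : ι → A) (i : ι) :
    d ((M *ᵥ v) i) = (M.map d *ᵥ v) i + (M *ᵥ fun j => d (v j)) i := by
  simp only [mulVec, dotProduct, map_sum, Derivation.leibniz, smul_eq_mul, map_apply,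
    ← sum_add_distrib]
  exact sum_congr rfl fun _ _ => by ring

theorem trace_pow_mul_map_derivation {K : Type*} [Field K] [CharZero K] [Algebra K A]
    [DecidableEq ι] (M : Matrix ι ι A) (q : ℕ) :
    trace (M ^ q * M.map d) = (q + 1 : K)⁻¹ • d (trace (M ^ (q + 1))) := by
  rw [derivation_trace_pow_succ, ← Nat.cast_smul_eq_nsmul K, smul_smul, Nat.cast_add_one,
    inv_mul_cancel₀ (Nat.cast_add_one_ne_zero q), one_smul]

end Matrix

namespace MvPolynomial

variable {R σ : Type*} [CommSemiring R]

theorem pderiv_pderiv_comm (i j : σ) (p : MvPolynomial σ R) :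
    pderiv i (pderiv j p) = pderiv j (pderiv i p) := by
  induction p using MvPolynomial.induction_on with
  | C a => simp
  | add p q hp hq => simp [hp, hq]
  | mul_X p s hp =>
    classical
    simp only [pderiv_mul, map_add, hp, pderiv_X, Pi.single_apply]
    split_ifs <;> simp [add_comm, add_left_comm]

theorem derivation_apply_eq_sum_mul_pderiv [Fintype σ]
    (D : Derivation R (MvPolynomial σ R) (MvPolynomial σ R)) (p : MvPolynomial σ R) :
    D p = ∑ i, D (X i) * pderiv i p := by
  induction p using MvPolynomial.induction_on with
  | C a => simp [← algebraMap_eq]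
  | add p q hp hq => simp [hp, hq, mul_add, sum_add_distrib]
  | mul_X p s hp =>
    classical
    simp only [Derivation.leibniz, pderiv_X, Pi.single_apply, hp, smul_eq_mul, mul_add,
      sum_add_distrib, mul_sum]
    simp [mul_left_comm (X s), mul_comm p]

end MvPolynomial

theorem Finset.eq_zero_of_forall_sum_mul_pow_eq_zero {R : Type*} [CommRing R] [IsDomain R]
    {s : Finset R} {c : R → R} (hc : ∀ μ ∈ s, c μ ≠ 0)
    (h : ∀ q, 1 ≤ q → ∑ μ ∈ s, c μ * μ ^ q = 0) : ∀ μ ∈ s, μ = 0 := by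
  classical
  have eval_sum (P : Polynomial R) (hP : P.coeff 0 = 0) : ∑ μ ∈ s, c μ * P.eval μ = 0 := by
    simp_rw [Polynomial.eval_eq_sum_range, mul_sum]
    rw [sum_comm]
    refine sum_eq_zero fun j _ => ?_
    rcases Nat.eq_zero_or_pos j with rfl | hj
    · simp [hP]
    · simp_rw [mul_left_comm (c _), ← mul_sum, h j hj, mul_zero]
  intro μ₀ hμ₀
  by_contra hne
  let P := Polynomial.X * ∏ ν ∈ s.erase μ₀, (Polynomial.X - Polynomial.C ν)
  have hP (μ : R) : P.eval μ = μ * ∏ ν ∈ s.erase μ₀, (μ - ν) := by simp [P, Polynomial.eval_prod]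
  have hsum : ∑ μ ∈ s, c μ * P.eval μ = c μ₀ * P.eval μ₀ :=
    sum_eq_single_of_mem μ₀ hμ₀ fun μ hμ hμ₀' => by
      rw [hP, prod_eq_zero (mem_erase.mpr ⟨hμ₀', hμ⟩) (sub_self μ), mul_zero,
        mul_zero]
  have hPμ₀ : P.eval μ₀ ≠ 0 := hP μ₀ ▸ mul_ne_zero hne
    (prod_ne_zero_iff.mpr fun ν hν => sub_ne_zero.mpr (ne_of_mem_erase hν).symm)
  exact mul_ne_zero (hc μ₀ hμ₀) hPμ₀ (hsum ▸ eval_sum P (by simp [P]))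

theorem LinearMap.trace_pow_eq_of_isNilpotent_sub_algebraMap {R M : Type*} [CommRing R]
    [IsReduced R] [AddCommGroup M] [Module R M] [Module.Free R M] [Module.Finite R M]
    {g : Module.End R M} {μ : R} (hg : IsNilpotent (g - algebraMap R _ μ)) (q : ℕ) :
    trace R M (g ^ q) = μ ^ q * Module.finrank R M := by
  induction q with
  | zero => simp
  | succ q ih =>
    rw [pow_succ, Module.End.mul_eq_comp,
      trace_comp_eq_mul_of_commute_of_isNilpotent μ ((Commute.refl g).pow_left q) hg, ih]
    ring

open Module End in
theorem Module.End.isNilpotent_of_forall_trace_pow_eq_zero {K V : Type*} [Field K] [CharZero K]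
    [IsAlgClosed K] [AddCommGroup V] [Module K V] [FiniteDimensional K V] {f : End K V}
    (h : ∀ q, 1 ≤ q → LinearMap.trace K V (f ^ q) = 0) : IsNilpotent f := by
  classical
  have hind := f.independent_maxGenEigenspace
  have hfin : {μ | f.maxGenEigenspace μ ≠ ⊥}.Finite :=
    WellFoundedGT.finite_ne_bot_of_iSupIndep hind
  have hint : DirectSum.IsInternal f.maxGenEigenspace :=
    DirectSum.isInternal_submodule_of_iSupIndep_of_iSup_eq_top hind f.iSup_maxGenEigenspace_eq_top
  have hmaps (μ : K) := f.mapsTo_maxGenEigenspace_of_comm (Commute.refl f) μ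
  have htrace (q : ℕ) (μ : K) : LinearMap.trace K _ ((f ^ q).restrict
      (f.mapsTo_maxGenEigenspace_of_comm ((Commute.refl f).pow_right q) μ)) =
      finrank K (f.maxGenEigenspace μ) * μ ^ q := by
    rw [← pow_restrict q (hmaps μ), LinearMap.trace_pow_eq_of_isNilpotent_sub_algebraMap, mul_comm]
    convert f.isNilpotent_restrict_maxGenEigenspace_sub_algebraMap μ using 1
    ext; simp; rfl
  have hzero : ∀ μ ∈ hfin.toFinset, μ = 0 := by
    refine Finset.eq_zero_of_forall_sum_mul_pow_eq_zero
      (c := fun μ => finrank K (f.maxGenEigenspace μ)) (fun μ hμ => ?_) fun q hq => ?_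
    · have := Submodule.nontrivial_iff_ne_bot.mpr ((Set.Finite.mem_toFinset hfin).mp hμ)
      exact Nat.cast_ne_zero.mpr finrank_pos.ne'
    · simp_rw [← htrace, ← LinearMap.trace_eq_sum_trace_restrict' hint hfin, h q hq]
  have htop : f.maxGenEigenspace 0 = ⊤ := by
    refine top_unique (f.iSup_maxGenEigenspace_eq_top ▸ iSup_le fun μ => ?_)
    by_cases hμ : f.maxGenEigenspace μ = ⊥
    · exact hμ ▸ bot_le
    · exact (hzero μ ((Set.Finite.mem_toFinset hfin).mpr hμ)).symm ▸ le_rfl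
  refine ((LinearMap.charpoly_nilpotent_tfae f).out 0 2).mpr fun m => ?_
  simpa [mem_maxGenEigenspace] using htop.ge (Submodule.mem_top (x := m))

theorem Matrix.isNilpotent_iff_forall_trace_pow_eq_zero {R ι : Type*} [CommRing R] [IsDomain R]
    [CharZero R] [Fintype ι] [DecidableEq ι] (A : Matrix ι ι R) :
    IsNilpotent A ↔ ∀ q, 1 ≤ q → trace (A ^ q) = 0 := by
  refine ⟨fun hA q hq => (isNilpotent_trace_of_isNilpotent (hA.pow_of_pos (by omega))).eq_zero,
    fun h => ?_⟩
  let K := AlgebraicClosure (FractionRing R)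
  let φ : R →+* K := (algebraMap (FractionRing R) K).comp (algebraMap R (FractionRing R))
  have hφ : Function.Injective φ :=
    (algebraMap (FractionRing R) K).injective.comp (IsFractionRing.injective R (FractionRing R))
  have : CharZero K := charZero_of_injective_algebraMap (algebraMap (FractionRing R) K).injective
  rw [← IsNilpotent.map_iff (f := φ.mapMatrix) (Matrix.map_injective hφ),
    ← IsNilpotent.map_iff (Matrix.toLinAlgEquiv' (R := K) (n := ι)).injective]
  refine Module.End.isNilpotent_of_forall_trace_pow_eq_zero fun q hq => ?_
  rw [← map_pow, ← map_pow]
  change LinearMap.trace K _ (Matrix.toLin' _) = 0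
  rw [Matrix.trace_toLin'_eq, RingHom.mapMatrix_apply, ← AddMonoidHom.map_trace, h q hq, map_zero]

section Jacobian

open Matrix

variable {K : Type*} [Field K] {m : ℕ}

theorem jac_apply (D : Der K m) (i j : Fin m) : jac D i j = pderiv j (D (X i)) := rfl

theorem lsMul_apply_X (D E : Der K m) (i : Fin m) : lsMul D E (X i) = D (E (X i)) :=
  mkDerivation_X _ _ i

theorem lsMul_apply_X_eq_mulVec (E D : Der K m) :
    (fun i => lsMul E D (X i)) = jac D *ᵥ fun i => E (X i) := by
  ext i
  rw [lsMul_apply_X, derivation_apply_eq_sum_mul_pderiv]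
  simp [mulVec, dotProduct, jac_apply, mul_comm]

theorem rpow_succ_apply_X (D : Der K m) (q : ℕ) :
    (fun i => rpow D (q + 1) (X i)) = jac D ^ q *ᵥ fun i => D (X i) := by
  induction q with
  | zero => simp [rpow]
  | succ q ih =>
    change (fun i => lsMul (rpow D (q + 1)) D (X i)) = _
    rw [lsMul_apply_X_eq_mulVec, ih, mulVec_mulVec, pow_succ']

theorem sum_mul_jac_map_pderiv_mulVec (D : Der K m) (N : Matrix (Fin m) (Fin m) (Pn K m))
    (w : Fin m → Pn K m) :
    ∑ i, (N *ᵥ (jac D).map (pderiv i) *ᵥ w) i = ∑ b, w b * trace (N * (jac D).map (pderiv b)) := by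
  simp only [mulVec, dotProduct, trace, Matrix.diag, mul_apply, map_apply, jac_apply,
    mul_sum]
  rw [sum_congr rfl fun i _ => sum_comm, sum_comm]
  refine sum_congr rfl fun b _ => sum_congr rfl fun i _ => sum_congr rfl fun a _ => ?_
  rw [pderiv_pderiv_comm]
  ring

theorem sum_mul_trace_jac_pow_mul_map_pderiv [CharZero K] (D E : Der K m) (s : ℕ) :
    ∑ b, E (X b) * trace (jac D ^ s * (jac D).map (pderiv b)) =
      (s + 1 : K)⁻¹ • E (trace (jac D ^ (s + 1))) := by
  simp_rw [trace_pow_mul_map_derivation (K := K), mul_smul_comm, ← smul_sum,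
    ← derivation_apply_eq_sum_mul_pderiv]

theorem divg_rpow_succ [CharZero K] (D : Der K m) (q : ℕ) :
    divg (rpow D (q + 1)) = trace (jac D ^ (q + 1)) +
      ∑ s ∈ range q, (s + 1 : K)⁻¹ • rpow D (q - s) (trace (jac D ^ (s + 1))) := by
  set f : Fin m → Pn K m := fun j => D (X j)
  have hrpow (s : ℕ) (hs : s ∈ range q) :
      jac D ^ (q - 1 - s) *ᵥ f = fun b => rpow D (q - s) (X b) := by
    rw [← rpow_succ_apply_X, show q - 1 - s + 1 = q - s by have := mem_range.mp hs; omega]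
  have htrace : ∑ i, (jac D ^ q *ᵥ fun j => pderiv i (f j)) i = trace (jac D ^ (q + 1)) := by
    simp [pow_succ, trace, mulVec, dotProduct, mul_apply, jac_apply, f]
  calc divg (rpow D (q + 1)) = ∑ i, pderiv i ((jac D ^ q *ᵥ f) i) :=
        sum_congr rfl fun i _ => by rw [← rpow_succ_apply_X]
    _ = ∑ i, ((jac D ^ q).map (pderiv i) *ᵥ f) i + trace (jac D ^ (q + 1)) := by
        simp_rw [derivation_mulVec_apply, sum_add_distrib, htrace]
    _ = _ := by
        rw [add_comm]
        simp_rw [map_derivation_pow, sum_mulVec, Finset.sum_apply, ← mulVec_mulVec]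
        rw [sum_comm]
        refine congrArg₂ _ rfl (sum_congr rfl fun s hs => ?_)
        rw [sum_mul_jac_map_pderiv_mulVec, hrpow s hs, sum_mul_trace_jac_pow_mul_map_pderiv]

theorem forall_trace_jac_pow_eq_zero_iff [CharZero K] (D : Der K m) :
    (∀ q : ℕ, 1 ≤ q → trace (jac D ^ q) = 0) ↔ ∀ q : ℕ, 1 ≤ q → divg (rpow D q) = 0 := by
  have key (q : ℕ) (h : ∀ s < q, trace (jac D ^ (s + 1)) = 0) :
      divg (rpow D (q + 1)) = trace (jac D ^ (q + 1)) := by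
    rw [divg_rpow_succ, sum_eq_zero fun s hs => by rw [h s (mem_range.mp hs), map_zero, smul_zero],
      add_zero]
  refine ⟨fun h q hq => ?_, fun h q hq => ?_⟩
  · obtain ⟨q, rfl⟩ : ∃ r, q = r + 1 := ⟨q - 1, by omega⟩
    rw [key q fun s _ => h (s + 1) (by omega), h (q + 1) hq]
  · obtain ⟨q, rfl⟩ : ∃ r, q = r + 1 := ⟨q - 1, by omega⟩
    induction q using Nat.strong_induction_on with
    | _ q ih => rw [← key q fun s hs => ih s hs (by omega), h (q + 1) hq]

end Jacobian

theorem jac_nilpotent_iff_divg_rpow_eq_zero_general (D : Der k n) :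
    IsNilpotent (jac D) ↔ ∀ q : ℕ, 1 ≤ q → divg (rpow D q) = 0 := by
  rw [Matrix.isNilpotent_iff_forall_trace_pow_eq_zero, forall_trace_jac_pow_eq_zero_iff]

/-- `J(D)` is nilpotent iff `div(D^{[q]}) = 0` for all `q ≥ 1`. -/
theorem jac_nilpotent_iff_divg_rpow_eq_zero (hn : 1 ≤ n) (D : Der k n) :
    IsNilpotent (jac D) ↔ ∀ q : ℕ, 1 ≤ q → divg (rpow D q) = 0 :=
  jac_nilpotent_iff_divg_rpow_eq_zero_general D
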